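/- Let K be a ℚ-algebra, r ≥ 1 an integer, A : ℕ → K a sequence with A_0 = 1, and B : {1,2,…} → K a sequence. Then A_d = Σ_{k=1}^{d} ((rd)!/k!) Σ_{a_1+…+a_k = d, a_i > 0} Π_{i=1}^{k} ( B_{a_i} / (r·a_i)! ) holds for all d ≥ 1 if and only if d·A_d = Σ_{e=1}^{d} e · B_e · A_{d−e} · C(rd, re) holds for all d ≥ 1. -/

import Mathlib

/-!
With `a_d = A_d / (r d)!`, `b_e = B_e / (r e)!` (and `b_0 = 0`) and `g = ∑ b_e X^e`, the summation
form says that `F = ∑ a_d X^d` equals `exp ∘ g`, because `[X^d] g^k` is the sum over compositions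
of `d` into `k` positive parts. Since `C(rd, re) / (rd)! = 1 / ((re)! (r(d-e))!)`, the convolution
form is the coefficientwise statement of `F' = g' F`. Over a `ℚ`-algebra, `exp ∘ g` is the unique
solution of this equation with constant term `1`.
-/

open Finset PowerSeries
open scoped Nat

namespace PowerSeries

theorem coeff_pow_eq_sum_antidiagonalTuple {R : Type*} [CommSemiring R] (f : R⟦X⟧) (k n : ℕ) :
    coeff n (f ^ k) = ∑ c ∈ Nat.antidiagonalTuple k n, ∏ i, coeff (c i) f := by
  classical
  rw [← Fin.prod_const, coeff_prod]
  exact sum_equiv Finsupp.equivFunOnFinite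
    (by simp [mem_finsuppAntidiag, Nat.mem_antidiagonalTuple]) (by simp)

theorem coeff_pow_eq_zero_of_lt {R : Type*} [Semiring R] {f : R⟦X⟧} (hf : constantCoeff f = 0)
    {n k : ℕ} (h : n < k) : coeff n (f ^ k) = 0 :=
  coeff_of_lt_order n ((Nat.cast_lt.mpr h).trans_le (le_order_pow_of_constantCoeff_eq_zero k hf))

theorem coeff_mk_update_zero_pow {R : Type*} [CommSemiring R] (f : ℕ → R) (k d : ℕ) :
    coeff d (mk (Function.update f 0 0) ^ k) =
      ∑ c ∈ (Nat.antidiagonalTuple k d).filter (fun c => ∀ i, 0 < c i), ∏ i, f (c i) := by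
  rw [coeff_pow_eq_sum_antidiagonalTuple,
    ← sum_filter_of_ne (p := fun c : Fin k → ℕ => ∀ i, 0 < c i)]
  · refine sum_congr rfl fun c hc => prod_congr rfl fun i _ => ?_
    rw [coeff_mk, Function.update_of_ne ((mem_filter.mp hc).2 i).ne']
  · intro c _ hc i
    refine Nat.pos_of_ne_zero fun hi => hc (prod_eq_zero (mem_univ i) ?_)
    rw [coeff_mk, hi, Function.update_self]

variable {K : Type*} [CommRing K] [Algebra ℚ K]

theorem coeff_exp_subst {g : K⟦X⟧} (hg : constantCoeff g = 0) (d : ℕ) :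
    coeff d ((exp K).subst g) =
      ∑ k ∈ range (d + 1), algebraMap ℚ K (1 / (k ! : ℚ)) * coeff d (g ^ k) := by
  rw [coeff_subst' (.of_constantCoeff_zero' hg),
    finsum_eq_sum_of_support_subset (s := range (d + 1))]
  · simp [coeff_exp]
  · intro k hk
    by_contra hkd
    simp [coeff_pow_eq_zero_of_lt hg (show d < k by simpa using hkd)] at hk

theorem derivative_exp_subst {g : K⟦X⟧} (hg : constantCoeff g = 0) :
    d⁄dX K ((exp K).subst g) = d⁄dX K g * (exp K).subst g := by
  rw [derivative_subst (.of_constantCoeff_zero' hg), derivative_exp, mul_comm]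

theorem constantCoeff_exp_subst {g : K⟦X⟧} (hg : constantCoeff g = 0) :
    constantCoeff ((exp K).subst g) = 1 := by
  simpa using coeff_exp_subst hg 0

theorem eq_iff_forall_coeff_eq_of_constantCoeff_eq {R : Type*} [Semiring R] {f g : R⟦X⟧}
    (h : constantCoeff f = constantCoeff g) : f = g ↔ ∀ d : ℕ, 1 ≤ d → coeff d f = coeff d g :=
  ⟨fun hfg _ _ => hfg ▸ rfl, fun H => ext fun d =>
    d.eq_zero_or_pos.elim (fun hd => by simpa [hd] using h) (H d)⟩

theorem eq_of_derivative_eq_mul_self {R : Type*} [CommRing R] [IsAddTorsionFree R] {f g h : R⟦X⟧}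
    (hg : d⁄dX R g = f * g) (hh : d⁄dX R h = f * h) (h0 : constantCoeff g = constantCoeff h) :
    g = h := by
  rw [← sub_eq_zero]
  set u := g - h
  have hu : d⁄dX R u = f * u := by simp only [u, map_sub, hg, hh, mul_sub]
  ext n
  rw [map_zero]
  induction n using Nat.strong_induction_on with
  | _ n ih =>
    rcases n with _ | n
    · simpa [u, sub_eq_zero] using h0
    have hrec : coeff (n + 1) u * (n + 1) = 0 := by
      rw [← coeff_derivative, hu, coeff_mul]
      exact sum_eq_zero fun ij hij => by
        rw [ih ij.2 (by have := mem_antidiagonal.mp hij; omega), mul_zero]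
    exact nsmul_right_injective n.succ_ne_zero (by simpa [nsmul_eq_mul, mul_comm] using hrec)

theorem eq_exp_subst_iff_derivative_eq {g F : K⟦X⟧} (hg : constantCoeff g = 0)
    (hF : constantCoeff F = 1) :
    F = (exp K).subst g ↔ d⁄dX K F = d⁄dX K g * F := by
  have : IsAddTorsionFree K := .of_module_rat K
  exact ⟨fun h => h ▸ derivative_exp_subst hg, fun h => eq_of_derivative_eq_mul_self h
    (derivative_exp_subst hg) (by rw [hF, constantCoeff_exp_subst hg])⟩

theorem derivative_mk_eq_mul_iff {R : Type*} [CommRing R] (a b : ℕ → R) :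
    d⁄dX R (mk a) = d⁄dX R (mk b) * mk a ↔
      ∀ d : ℕ, 1 ≤ d → (d : R) * a d = ∑ e ∈ Icc 1 d, (e : R) * b e * a (d - e) := by
  have hcoeff (n : ℕ) : coeff n (d⁄dX R (mk b) * mk a) =
      ∑ e ∈ Icc 1 (n + 1), (e : R) * b e * a (n + 1 - e) := by
    rw [coeff_mul,
      Nat.sum_antidiagonal_eq_sum_range_succ fun i j => coeff i (d⁄dX R (mk b)) * coeff j (mk a),
      Nat.range_succ_eq_Icc_zero, ← map_add_right_Icc 0 n 1, sum_map]
    refine sum_congr rfl fun k _ => ?_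
    have hkn : n + 1 - (k + 1) = n - k := by omega
    simp [coeff_derivative, hkn, mul_comm]
  rw [PowerSeries.ext_iff]
  refine ⟨fun h d hd => ?_, fun h n => ?_⟩
  · obtain ⟨n, rfl⟩ := Nat.exists_eq_add_of_le' hd
    rw [← hcoeff, ← h, coeff_derivative, coeff_mk, mul_comm, Nat.cast_succ]
  · rw [hcoeff, ← h (n + 1) n.succ_pos, coeff_derivative, coeff_mk, mul_comm, Nat.cast_succ]

end PowerSeries

section FactorialNormalization

variable {K : Type*} [CommRing K] [Algebra ℚ K]

theorem isUnit_algebraMap_one_div_factorial (n : ℕ) : IsUnit (algebraMap ℚ K (1 / (n ! : ℚ))) :=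
  (Ne.isUnit (by positivity)).map _

theorem Nat.choose_mul_one_div_factorial {m n : ℕ} (h : m ≤ n) :
    (n.choose m : ℚ) * (1 / n !) = 1 / m ! * (1 / (n - m) !) := by
  rw [Nat.cast_choose ℚ h]
  field_simp

noncomputable def divFactorial (r : ℕ) (A : ℕ → K) (d : ℕ) : K :=
  A d * algebraMap ℚ K (1 / ((r * d) ! : ℚ))

theorem eq_sum_compositions_iff_divFactorial_eq_coeff_exp_subst (r : ℕ) (A B : ℕ → K) {d : ℕ}
    (hd : 1 ≤ d) :
    (A d = ∑ k ∈ Icc 1 d, algebraMap ℚ K (((r * d) ! : ℚ) / (k ! : ℚ)) *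
        ∑ c ∈ (Nat.antidiagonalTuple k d).filter (fun c => ∀ i, 0 < c i),
          ∏ i, B (c i) * algebraMap ℚ K (1 / ((r * c i) ! : ℚ))) ↔
      divFactorial r A d =
        coeff d ((exp K).subst (mk (Function.update (divFactorial r B) 0 0))) := by
  have hg : constantCoeff (mk (Function.update (divFactorial r B) 0 0)) = 0 := by simp
  rw [← (isUnit_algebraMap_one_div_factorial (r * d)).mul_left_inj, coeff_exp_subst hg,
    Nat.range_succ_eq_Icc_zero, Icc_eq_cons_Ioc d.zero_le, sum_cons, ← Icc_add_one_left_eq_Ioc,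
    zero_add, pow_zero, coeff_one, if_neg (by omega), mul_zero, zero_add, sum_mul]
  refine Eq.congr rfl (sum_congr rfl fun k _ => ?_)
  rw [coeff_mk_update_zero_pow, mul_right_comm, ← map_mul]
  congr 2
  field_simp

theorem mul_eq_sum_choose_iff_divFactorial (r : ℕ) (A B : ℕ → K) (d : ℕ) :
    ((d : K) * A d = ∑ e ∈ Icc 1 d, (e : K) * B e * A (d - e) * ((r * d).choose (r * e) : K)) ↔
      (d : K) * divFactorial r A d = ∑ e ∈ Icc 1 d,
        (e : K) * Function.update (divFactorial r B) 0 0 e * divFactorial r A (d - e) := by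
  rw [← (isUnit_algebraMap_one_div_factorial (r * d)).mul_left_inj, sum_mul, mul_assoc]
  refine Eq.congr rfl (sum_congr rfl fun e he => ?_)
  obtain ⟨he1, hed⟩ := mem_Icc.mp he
  have hchoose : ((r * d).choose (r * e) : K) * algebraMap ℚ K (1 / ((r * d) ! : ℚ)) =
      algebraMap ℚ K (1 / ((r * e) ! : ℚ)) * algebraMap ℚ K (1 / ((r * (d - e)) ! : ℚ)) := by
    rw [← map_natCast (algebraMap ℚ K), ← map_mul, ← map_mul, Nat.mul_sub,
      Nat.choose_mul_one_div_factorial (Nat.mul_le_mul_left r hed)]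
  rw [Function.update_of_ne (by omega), divFactorial, divFactorial, mul_assoc, hchoose]
  ring

end FactorialNormalization

theorem factorial_normalized_exp_recursion_general {K : Type*} [CommRing K] [Algebra ℚ K]
    (r : ℕ) (A B : ℕ → K) (hA0 : A 0 = 1) :
    (∀ d : ℕ, 1 ≤ d →
      A d = ∑ k ∈ Finset.Icc 1 d,
        algebraMap ℚ K ((Nat.factorial (r * d) : ℚ) / (Nat.factorial k : ℚ)) *
          ∑ c ∈ (Finset.Nat.antidiagonalTuple k d).filter (fun c => ∀ i, 0 < c i),
            ∏ i, B (c i) * algebraMap ℚ K (1 / (Nat.factorial (r * c i) : ℚ)))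
    ↔ (∀ d : ℕ, 1 ≤ d →
      (d : K) * A d = ∑ e ∈ Finset.Icc 1 d,
        (e : K) * B e * A (d - e) * (Nat.choose (r * d) (r * e) : K)) := by
  set a := divFactorial r A
  set b := Function.update (divFactorial r B) 0 0
  have hb : constantCoeff (mk b) = 0 := by simp [b]
  have ha : constantCoeff (mk a) = 1 := by simp [a, divFactorial, hA0]
  calc _ ↔ ∀ d : ℕ, 1 ≤ d → coeff d (mk a) = coeff d ((exp K).subst (mk b)) :=
        forall₂_congr fun d hd => by
          rw [coeff_mk]
          exact eq_sum_compositions_iff_divFactorial_eq_coeff_exp_subst r A B hd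
    _ ↔ mk a = (exp K).subst (mk b) :=
        (eq_iff_forall_coeff_eq_of_constantCoeff_eq (by rw [ha, constantCoeff_exp_subst hb])).symm
    _ ↔ d⁄dX K (mk a) = d⁄dX K (mk b) * mk a := eq_exp_subst_iff_derivative_eq hb ha
    _ ↔ _ := (derivative_mk_eq_mul_iff a b).trans <|
        forall₂_congr fun d _ => (mul_eq_sum_choose_iff_divFactorial r A B d).symm

/-- Factorial-normalized exponential recursion lemma: for a commutative `ℚ`-algebra `K`,
`A : ℕ → K` with `A 0 = 1` and `B : ℕ → K`, the summation-form recursion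
`A_d = Σ_{k=1}^d ((rd)!/k!) Σ_{a_1+…+a_k=d, a_i>0} Π_i B_{a_i}/(r·a_i)!` holds for all
`d ≥ 1` iff the convolution-form recursion `d·A_d = Σ_{e=1}^d e·B_e·A_{d−e}·C(rd,re)`
holds for all `d ≥ 1`. -/
theorem factorial_normalized_exp_recursion {K : Type*} [CommRing K] [Algebra ℚ K]
    (r : ℕ) (hr : 1 ≤ r) (A B : ℕ → K) (hA0 : A 0 = 1) :
    (∀ d : ℕ, 1 ≤ d →
      A d = ∑ k ∈ Finset.Icc 1 d,
        algebraMap ℚ K ((Nat.factorial (r * d) : ℚ) / (Nat.factorial k : ℚ)) *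
          ∑ c ∈ (Finset.Nat.antidiagonalTuple k d).filter (fun c => ∀ i, 0 < c i),
            ∏ i, B (c i) * algebraMap ℚ K (1 / (Nat.factorial (r * c i) : ℚ)))
    ↔ (∀ d : ℕ, 1 ≤ d →
      (d : K) * A d = ∑ e ∈ Finset.Icc 1 d,
        (e : K) * B e * A (d - e) * (Nat.choose (r * d) (r * e) : K)) :=
  factorial_normalized_exp_recursion_general r A B hA0
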